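/- arXiv:1506.05497 — 3 statements merged into one kernel-verified Lean document; each statement's English description precedes it below -/
import Mathlib

section
/- Let f : ℝᵐ → ℝⁿ, Γ ⊆ ℝᵐ, and g : ℝᵐ → ℝ. Define φ(y) = sup{ g(x) : x ∈ Γ, f(x) = y } (with φ(y) = -∞ if no such x exists), let φ̂ be the concave envelope of φ, and set ĝ = φ̂ ∘ f. Then ĝ is the (f,Γ)-concave envelope of g: ĝ is f-concave, ĝ(x) ≥ g(x) for all x ∈ Γ, and for any f-concave g̃ with g̃ ≥ g on Γ one has g̃ ≥ ĝ on Γ. -/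
theorem forall_sSup_fiber_le_iff {α β : Type*} (f : α → β) (Γ : Set α) (g : α → ℝ)
    (ψ : β → ℝ) :
    (∀ y, sSup ((fun x => (g x : EReal)) '' {x | x ∈ Γ ∧ f x = y}) ≤ (ψ y : EReal)) ↔
      ∀ x ∈ Γ, g x ≤ ψ (f x) := by
  simp only [sSup_le_iff, Set.forall_mem_image, Set.mem_ofPred_eq, EReal.coe_le_coe_iff]
  exact ⟨fun h x hx => h (f x) ⟨hx, rfl⟩, fun h y x ⟨hx, hxy⟩ => hxy ▸ h x hx⟩

/-- The construction of `(f,Γ)`-concave envelopes. Define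
`φ y = sup { g x : x ∈ Γ, f x = y }` (valued in `EReal`, equal to `⊥ = -∞` when the set
is empty), let `φ̂` be the concave envelope of `φ` (a concave real-valued function that
majorizes `φ` and is least among concave real-valued majorants of `φ`), and set
`ĝ = φ̂ ∘ f`. Then `ĝ` is `f`-concave, `ĝ ≥ g` on `Γ`, and any `f`-concave function
majorizing `g` on `Γ` majorizes `ĝ` on `Γ`. -/
theorem stmt_4 (m n : ℕ) (f : (Fin m → ℝ) → (Fin n → ℝ))
    (Γ : Set (Fin m → ℝ)) (g : (Fin m → ℝ) → ℝ)
    (φ : (Fin n → ℝ) → EReal)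
    (hφ : ∀ y, φ y = sSup ((fun x => (g x : EReal)) '' {x | x ∈ Γ ∧ f x = y}))
    (φhat : (Fin n → ℝ) → ℝ)
    (hφhat_conc : ConcaveOn ℝ Set.univ φhat)
    (hφhat_maj : ∀ y, φ y ≤ (φhat y : EReal))
    (hφhat_min : ∀ ψ : (Fin n → ℝ) → ℝ, ConcaveOn ℝ Set.univ ψ →
      (∀ y, φ y ≤ (ψ y : EReal)) → ∀ y, φhat y ≤ ψ y) :
    (∃ φ' : (Fin n → ℝ) → ℝ, ConcaveOn ℝ Set.univ φ' ∧ (φhat ∘ f) = φ' ∘ f) ∧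
    (∀ x ∈ Γ, g x ≤ (φhat ∘ f) x) ∧
    (∀ gt : (Fin m → ℝ) → ℝ,
      (∃ ψ : (Fin n → ℝ) → ℝ, ConcaveOn ℝ Set.univ ψ ∧ gt = ψ ∘ f) →
      (∀ x ∈ Γ, g x ≤ gt x) → ∀ x ∈ Γ, (φhat ∘ f) x ≤ gt x) := by
  obtain rfl : φ = fun y => sSup ((fun x => (g x : EReal)) '' {x | x ∈ Γ ∧ f x = y}) :=
    funext hφ
  refine ⟨⟨φhat, hφhat_conc, rfl⟩, (forall_sSup_fiber_le_iff f Γ g φhat).mp hφhat_maj, ?_⟩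
  rintro _ ⟨ψ, hψ_conc, rfl⟩ hψ_maj x -
  exact hφhat_min ψ hψ_conc ((forall_sSup_fiber_le_iff f Γ g ψ).mpr hψ_maj) (f x)
end

section
/- Let ĝ = φ̂ ∘ f be the (f,Γ)-concave envelope of g, and let Γ' = { x ∈ Γ : g(x) = ĝ(x) } be the touching set. Suppose a ∈ Γ, y ∈ ∂φ̂(f(a)), but a ∉ Γ'. Then there exists a' ∈ Γ such that g(a) + y·(f(a') - f(a)) < g(a'). -/
/-! The affine function `ψ x' = g a + ∑ i, y i * (x' i - f a i)` is concave and equals `g a`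
at `f a`. If no `a' ∈ Γ` lifted `g` above it, `ψ ∘ f` would majorize `g` on `Γ`, and minimality
of the envelope would give `φ̂ (f a) ≤ ψ (f a) = g a ≤ φ̂ (f a)`, so `a` would be a touching
point. -/

open Finset

lemma concaveOn_const_add_sum_mul_sub {ι : Type*} [Fintype ι] (c : ℝ) (y x₀ : ι → ℝ) :
    ConcaveOn ℝ Set.univ fun x : ι → ℝ => c + ∑ i, y i * (x i - x₀ i) := by
  let ℓ : (ι → ℝ) →ₗ[ℝ] ℝ := ∑ i, y i • LinearMap.proj i
  have hℓ : (fun x : ι → ℝ => c + ∑ i, y i * (x i - x₀ i)) =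
      fun x => ℓ x + (c - ∑ i, y i * x₀ i) := by
    ext x
    simp only [ℓ, LinearMap.coe_sum, LinearMap.coe_smul, LinearMap.coe_proj, Finset.sum_apply,
      Pi.smul_apply, Function.eval, smul_eq_mul, mul_sub, sum_sub_distrib]
    ring
  rw [hℓ]
  exact (ℓ.concaveOn convex_univ).add_const _

lemma exists_lt_of_concaveOn_of_lt_envelope {E F : Type*} [AddCommGroup F] [Module ℝ F]
    {f : E → F} {Γ : Set E} {g : E → ℝ} {φ ψ : F → ℝ}
    (hmin : ∀ χ : F → ℝ, ConcaveOn ℝ Set.univ χ →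
      (∀ x ∈ Γ, g x ≤ χ (f x)) → ∀ x ∈ Γ, φ (f x) ≤ χ (f x))
    (hψ : ConcaveOn ℝ Set.univ ψ) {a : E} (ha : a ∈ Γ) (hlt : ψ (f a) < φ (f a)) :
    ∃ a' ∈ Γ, ψ (f a') < g a' := by
  by_contra! hle
  exact (hmin ψ hψ hle a ha).not_gt hlt

theorem stmt_6_general (m n : ℕ) (f : (Fin m → ℝ) → (Fin n → ℝ))
    (Γ : Set (Fin m → ℝ)) (g : (Fin m → ℝ) → ℝ) (φhat : (Fin n → ℝ) → ℝ)
    (hmaj : ∀ x ∈ Γ, g x ≤ φhat (f x))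
    (hmin : ∀ ψ : (Fin n → ℝ) → ℝ, ConcaveOn ℝ Set.univ ψ →
      (∀ x ∈ Γ, g x ≤ ψ (f x)) → ∀ x ∈ Γ, φhat (f x) ≤ ψ (f x))
    (a : Fin m → ℝ) (ha : a ∈ Γ) (y : Fin n → ℝ)
    (hnt : g a ≠ φhat (f a)) :
    ∃ a' ∈ Γ, g a + ∑ i, y i * (f a' i - f a i) < g a' := by
  have hlt : g a < φhat (f a) := (hmaj a ha).lt_of_ne hnt
  exact exists_lt_of_concaveOn_of_lt_envelope (f := f) hmin
    (concaveOn_const_add_sum_mul_sub (g a) y (f a)) ha (by simpa using hlt)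

/-- Let `ĝ = φ̂ ∘ f` be the `(f,Γ)`-concave envelope of `g` and
`Γ' = {x ∈ Γ : g x = ĝ x}` the touching set. If `a ∈ Γ`, `y ∈ ∂φ̂(f a)` but `a ∉ Γ'`,
then there is `a' ∈ Γ` with `g a + y·(f a' - f a) < g a'`. -/
theorem stmt_6 (m n : ℕ) (f : (Fin m → ℝ) → (Fin n → ℝ))
    (Γ : Set (Fin m → ℝ)) (g : (Fin m → ℝ) → ℝ) (φhat : (Fin n → ℝ) → ℝ)
    (hconc : ConcaveOn ℝ Set.univ φhat)
    (hmaj : ∀ x ∈ Γ, g x ≤ φhat (f x))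
    (hmin : ∀ ψ : (Fin n → ℝ) → ℝ, ConcaveOn ℝ Set.univ ψ →
      (∀ x ∈ Γ, g x ≤ ψ (f x)) → ∀ x ∈ Γ, φhat (f x) ≤ ψ (f x))
    (a : Fin m → ℝ) (ha : a ∈ Γ) (y : Fin n → ℝ)
    (hy : ∀ x' : Fin n → ℝ, φhat x' ≤ φhat (f a) + ∑ i, y i * (x' i - f a i))
    (hnt : g a ≠ φhat (f a)) :
    ∃ a' ∈ Γ, g a + ∑ i, y i * (f a' i - f a i) < g a' :=
  stmt_6_general m n f Γ g φhat hmaj hmin a ha y hnt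
end

section
/- Let Λ' be a strictly positive-definite diagonal matrix on ℝ^{n-1}, g' ∈ ℝ^{n-1} with 1ᵀg' = 1, α > 0, β > 0. Define μ(z,x) = -(1/2)α²z² - (β/2)xᵀΛ'x on ℝ × ℝ^{n-1}, and let Λ = diag(α², βΛ'). Then the function h(y,z) = μ(z, g'(y-z)) is jointly concave on ℝ², strictly concave in z for each y, and its maximizer over z is T(y) = (βγ'/(α² + βγ'))y where γ' = g'ᵀΛ'g'. Moreover, the vector g = (T(1), g'(1 - T(1))) ∈ ℝⁿ satisfies 1ᵀg = 1 and sup_z h(y,z) = -(1/2)(gᵀΛg)y². -/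
open Matrix Set

/-!
Since `x ↦ xᵀΛ'x` is quadratic, `h (y, z) = -(α²/2) z² - (βγ'/2) (y - z)²`. This is a nonnegative
combination of negated squares of linear forms, hence jointly concave, and strictly concave in `z`
because `α > 0`. Completing the square,
`h (y, T y) - h (y, z) = ((α² + βγ')/2) (z - T y)²`. Finally `Λ` is block diagonal, so with
`t = T 1` one gets `gᵀΛg = α² t² + β (1 - t)² γ'`, and `h (y, t y) = -(1/2) gᵀΛg y²` is an identity.
-/

section StrictSMul

variable {𝕜 E β : Type*} [CommSemiring 𝕜] [PartialOrder 𝕜] [AddCommMonoid E]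
  [AddCommMonoid β] [PartialOrder β] [SMul 𝕜 E] [Module 𝕜 β] [PosSMulStrictMono 𝕜 β]
  {s : Set E} {f : E → β} {c : 𝕜}

theorem StrictConvexOn.smul (hc : 0 < c) (hf : StrictConvexOn 𝕜 s f) :
    StrictConvexOn 𝕜 s fun x => c • f x :=
  ⟨hf.1, fun x hx y hy hxy a b ha hb hab =>
    calc
      c • f (a • x + b • y) < c • (a • f x + b • f y) :=
        smul_lt_smul_of_pos_left (hf.2 hx hy hxy ha hb hab) hc
      _ = a • c • f x + b • c • f y := by rw [smul_add, smul_comm c, smul_comm c]⟩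

theorem StrictConcaveOn.smul (hc : 0 < c) (hf : StrictConcaveOn 𝕜 s f) :
    StrictConcaveOn 𝕜 s fun x => c • f x :=
  hf.dual.smul hc

end StrictSMul

section QuadraticForm

variable {R : Type*} [CommRing R] {n : ℕ}

theorem Matrix.smul_dotProduct_mulVec_smul {ι : Type*} [Fintype ι] (A : Matrix ι ι R) (v : ι → R)
    (c : R) : (c • v) ⬝ᵥ A *ᵥ (c • v) = c ^ 2 * (v ⬝ᵥ A *ᵥ v) := by
  rw [smul_dotProduct, mulVec_smul, dotProduct_smul, smul_eq_mul, smul_eq_mul]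
  ring

theorem Matrix.dotProduct_mulVec_eq_corner_add_submatrix (A : Matrix (Fin (n + 1)) (Fin (n + 1)) R)
    (h0j : ∀ j : Fin n, A 0 j.succ = 0) (hi0 : ∀ i : Fin n, A i.succ 0 = 0)
    (v : Fin (n + 1) → R) :
    v ⬝ᵥ A *ᵥ v =
      A 0 0 * v 0 ^ 2 + Fin.tail v ⬝ᵥ A.submatrix Fin.succ Fin.succ *ᵥ Fin.tail v := by
  simp only [dotProduct, mulVec, Fin.sum_univ_succ, h0j, hi0, Fin.tail, submatrix_apply,
    zero_mul, add_zero, zero_add, Finset.sum_const_zero]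
  ring

end QuadraticForm

noncomputable def reducedPayoff (a b y z : ℝ) : ℝ := -(a / 2) * z ^ 2 - (b / 2) * (y - z) ^ 2

section ReducedPayoff

variable {a b : ℝ}

theorem concaveOn_neg_sq : ConcaveOn ℝ univ fun x : ℝ => -x ^ 2 :=
  neg_concaveOn_iff.2 even_two.convexOn_pow

theorem strictConcaveOn_neg_sq : StrictConcaveOn ℝ univ fun x : ℝ => -x ^ 2 :=
  neg_strictConcaveOn_iff.2 (even_two.strictConvexOn_pow two_ne_zero)

theorem concaveOn_reducedPayoff (ha : 0 ≤ a) (hb : 0 ≤ b) :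
    ConcaveOn ℝ univ fun p : ℝ × ℝ => reducedPayoff a b p.1 p.2 := by
  have hz := (concaveOn_neg_sq.comp_linearMap (LinearMap.snd ℝ ℝ ℝ)).smul
    (by positivity : (0 : ℝ) ≤ a / 2)
  have hx := (concaveOn_neg_sq.comp_linearMap
    (LinearMap.fst ℝ ℝ ℝ - LinearMap.snd ℝ ℝ ℝ)).smul (by positivity : (0 : ℝ) ≤ b / 2)
  rw [preimage_univ] at hz hx
  refine (hz.add hx).congr fun p _ => ?_
  simp only [reducedPayoff, Pi.add_apply, Function.comp_apply, smul_eq_mul, LinearMap.sub_apply,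
    LinearMap.fst_apply, LinearMap.snd_apply]
  ring

theorem strictConcaveOn_reducedPayoff (ha : 0 < a) (hb : 0 ≤ b) (y : ℝ) :
    StrictConcaveOn ℝ univ (reducedPayoff a b y) := by
  have hz := strictConcaveOn_neg_sq.smul (half_pos ha)
  have hx := (concaveOn_neg_sq.translate_right (-y)).smul (by positivity : (0 : ℝ) ≤ b / 2)
  rw [preimage_univ] at hx
  refine (hz.add_concaveOn hx).congr fun z _ => ?_
  simp only [reducedPayoff, Pi.add_apply, Function.comp_apply, smul_eq_mul]
  ring

theorem reducedPayoff_le (hab : 0 < a + b) (y z : ℝ) :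
    reducedPayoff a b y z ≤ reducedPayoff a b y (b / (a + b) * y) := by
  have hvertex : reducedPayoff a b y (b / (a + b) * y) - reducedPayoff a b y z =
      (a + b) / 2 * (z - b / (a + b) * y) ^ 2 := by
    unfold reducedPayoff
    field_simp
    ring
  nlinarith [mul_nonneg hab.le (sq_nonneg (z - b / (a + b) * y))]

end ReducedPayoff

theorem stmt_12_general (k : ℕ) (Λ' : Matrix (Fin k) (Fin k) ℝ)
    (hpd : ∀ x : Fin k → ℝ, x ≠ 0 → 0 < x ⬝ᵥ Λ'.mulVec x)
    (g' : Fin k → ℝ) (hg' : ∑ i, g' i = 1)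
    (α β : ℝ) (hα : 0 < α) (hβ : 0 < β)
    (μ : ℝ × (Fin k → ℝ) → ℝ)
    (hμ : ∀ (z : ℝ) (x : Fin k → ℝ),
      μ (z, x) = -(1/2) * α^2 * z^2 - (β/2) * (x ⬝ᵥ Λ'.mulVec x))
    (Λ : Matrix (Fin (k+1)) (Fin (k+1)) ℝ)
    (hΛ00 : Λ 0 0 = α^2)
    (hΛ0j : ∀ j : Fin k, Λ 0 j.succ = 0)
    (hΛi0 : ∀ i : Fin k, Λ i.succ 0 = 0)
    (hΛij : ∀ i j : Fin k, Λ i.succ j.succ = β * Λ' i j)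
    (T : ℝ → ℝ)
    (hT : ∀ y : ℝ, T y = β * (g' ⬝ᵥ Λ'.mulVec g') / (α^2 + β * (g' ⬝ᵥ Λ'.mulVec g')) * y)
    (g : Fin (k+1) → ℝ)
    (hg0 : g 0 = T 1) (hgs : ∀ i : Fin k, g i.succ = (1 - T 1) * g' i) :
    ConcaveOn ℝ Set.univ (fun p : ℝ × ℝ => μ (p.2, (p.1 - p.2) • g')) ∧
    (∀ y : ℝ, StrictConcaveOn ℝ Set.univ (fun z : ℝ => μ (z, (y - z) • g'))) ∧
    (∀ y z : ℝ, μ (z, (y - z) • g') ≤ μ (T y, (y - T y) • g')) ∧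
    (∑ i, g i = 1) ∧
    (∀ y : ℝ, μ (T y, (y - T y) • g') = -(1/2) * (g ⬝ᵥ Λ.mulVec g) * y^2) := by
  set γ := g' ⬝ᵥ Λ' *ᵥ g'
  have hγ : 0 < γ := hpd g' fun h => by simp [h] at hg'
  have hh : ∀ y z, μ (z, (y - z) • g') = reducedPayoff (α ^ 2) (β * γ) y z := fun y z => by
    rw [hμ, smul_dotProduct_mulVec_smul, reducedPayoff]
    ring
  have hTy : ∀ y, T y = T 1 * y := fun y => by rw [hT, hT 1, mul_one]
  have hgtail : Fin.tail g = (1 - T 1) • g' := funext hgs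
  have hΛtail : Λ.submatrix Fin.succ Fin.succ = β • Λ' := Matrix.ext hΛij
  simp only [hh]
  refine ⟨concaveOn_reducedPayoff (by positivity) (by positivity),
    strictConcaveOn_reducedPayoff (by positivity) (by positivity),
    fun y z => hT y ▸ reducedPayoff_le (by positivity) y z, ?_, fun y => ?_⟩
  · rw [Fin.sum_univ_succ, hg0]
    simp only [hgs, ← Finset.mul_sum, hg', mul_one, add_sub_cancel]
  · rw [Λ.dotProduct_mulVec_eq_corner_add_submatrix hΛ0j hΛi0, hgtail, hΛtail, smul_mulVec,
      dotProduct_smul, smul_dotProduct_mulVec_smul, hΛ00, hg0, hTy y, reducedPayoff]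
    simp only [smul_eq_mul]
    ring

/-- Inductive step for quadratic utilities. With `Λ'` strictly
positive-definite diagonal on `ℝ^k`, `1ᵀ g' = 1`, `α > 0`, `β > 0`,
`μ (z, x) = -(1/2) α² z² - (β/2) xᵀ Λ' x`, and `Λ = diag(α², βΛ')`: the function
`h (y, z) = μ (z, (y - z) • g')` is jointly concave, strictly concave in `z` for each
`y`, maximized over `z` at `T y = (βγ'/(α² + βγ')) y` with `γ' = g'ᵀ Λ' g'`; and the
vector `g = (T 1, (1 - T 1) • g')` satisfies `1ᵀ g = 1` and
`sup_z h (y, z) = -(1/2)(gᵀ Λ g) y²`. -/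
theorem stmt_12 (k : ℕ) (Λ' : Matrix (Fin k) (Fin k) ℝ) (hdiag : Λ'.IsDiag)
    (hpd : ∀ x : Fin k → ℝ, x ≠ 0 → 0 < x ⬝ᵥ Λ'.mulVec x)
    (g' : Fin k → ℝ) (hg' : ∑ i, g' i = 1)
    (α β : ℝ) (hα : 0 < α) (hβ : 0 < β)
    (μ : ℝ × (Fin k → ℝ) → ℝ)
    (hμ : ∀ (z : ℝ) (x : Fin k → ℝ),
      μ (z, x) = -(1/2) * α^2 * z^2 - (β/2) * (x ⬝ᵥ Λ'.mulVec x))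
    (Λ : Matrix (Fin (k+1)) (Fin (k+1)) ℝ)
    (hΛ00 : Λ 0 0 = α^2)
    (hΛ0j : ∀ j : Fin k, Λ 0 j.succ = 0)
    (hΛi0 : ∀ i : Fin k, Λ i.succ 0 = 0)
    (hΛij : ∀ i j : Fin k, Λ i.succ j.succ = β * Λ' i j)
    (T : ℝ → ℝ)
    (hT : ∀ y : ℝ, T y = β * (g' ⬝ᵥ Λ'.mulVec g') / (α^2 + β * (g' ⬝ᵥ Λ'.mulVec g')) * y)
    (g : Fin (k+1) → ℝ)
    (hg0 : g 0 = T 1) (hgs : ∀ i : Fin k, g i.succ = (1 - T 1) * g' i) :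
    ConcaveOn ℝ Set.univ (fun p : ℝ × ℝ => μ (p.2, (p.1 - p.2) • g')) ∧
    (∀ y : ℝ, StrictConcaveOn ℝ Set.univ (fun z : ℝ => μ (z, (y - z) • g'))) ∧
    (∀ y z : ℝ, μ (z, (y - z) • g') ≤ μ (T y, (y - T y) • g')) ∧
    (∑ i, g i = 1) ∧
    (∀ y : ℝ, μ (T y, (y - T y) • g') = -(1/2) * (g ⬝ᵥ Λ.mulVec g) * y^2) :=
  stmt_12_general k Λ' hpd g' hg' α β hα hβ μ hμ Λ hΛ00 hΛ0j hΛi0 hΛij T hT g hg0 hgs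
end
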